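/- Let $c > 0$ and $\lambda > 0$. Then every nonzero twice continuously differentiable solution $\xi : (0,\infty) \to \mathbb{R}$ of $\xi''(z) - \frac{3}{z+c}\,\xi'(z) + \lambda\,\xi(z) = 0$ has infinitely many zeros in $(0,\infty)$. -/

import Mathlib

open Set Real


lemma sturm_contra (v v' v'' : ℝ → ℝ) (a k : ℝ) (hk : 0 < k)
    (hd1 : ∀ z ∈ Icc a (a + π/k), HasDerivAt v (v' z) z)
    (hd2 : ∀ z ∈ Icc a (a + π/k), HasDerivAt v' (v'' z) z)
    (hpos : ∀ z ∈ Icc a (a + π/k), 0 < v z)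
    (hQ : ∀ z ∈ Icc a (a + π/k), v'' z ≤ -(k^2) * v z) : False := by
  set b := a + π/k with hb
  have hab : a < b := lt_add_of_pos_right _ (div_pos Real.pi_pos hk)
  have hkb : k * (b - a) = π := by
    rw [hb]; field_simp; ring
  set W : ℝ → ℝ := fun z => v' z * Real.sin (k * (z - a))
      - v z * (k * Real.cos (k * (z - a))) with hWdef
  have hlin : ∀ z : ℝ, HasDerivAt (fun z => k * (z - a)) k z := by
    intro z
    simpa using (((hasDerivAt_id z).sub_const a).const_mul k)
  have hW : ∀ z ∈ Icc a b, HasDerivAt W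
      (v'' z * Real.sin (k * (z - a)) + k^2 * (v z * Real.sin (k * (z - a)))) z := by
    intro z hz
    have hs : HasDerivAt (fun z => Real.sin (k * (z - a)))
        (Real.cos (k * (z - a)) * k) z :=
      (Real.hasDerivAt_sin _).comp z (hlin z)
    have hcterm : HasDerivAt (fun z => k * Real.cos (k * (z - a)))
        (k * (-Real.sin (k * (z - a)) * k)) z :=
      ((Real.hasDerivAt_cos _).comp z (hlin z)).const_mul k
    have := ((hd2 z hz).mul hs).sub ((hd1 z hz).mul hcterm)
    exact this.congr_deriv (by ring)
  have hsnn : ∀ z ∈ Icc a b, 0 ≤ Real.sin (k * (z - a)) := by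
    intro z hz
    apply Real.sin_nonneg_of_nonneg_of_le_pi
    · nlinarith [hz.1]
    · nlinarith [hz.2, div_mul_cancel₀ π hk.ne']
  have hanti : AntitoneOn W (Icc a b) := by
    apply antitoneOn_of_deriv_nonpos (convex_Icc a b)
    · intro z hz; exact (hW z hz).continuousAt.continuousWithinAt
    · intro z hz
      rw [interior_Icc] at hz
      exact (hW z (Ioo_subset_Icc_self hz)).differentiableAt.differentiableWithinAt
    · intro z hz
      rw [interior_Icc] at hz
      have hz' := Ioo_subset_Icc_self hz
      rw [(hW z hz').deriv]
      have h1 := hQ z hz'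
      have h2 := hsnn z hz'
      have h3 := hpos z hz'
      nlinarith
  have hWa : W a = -(v a * k) := by
    simp [hWdef]
  have hWb : W b = v b * k := by
    simp [hWdef, hkb]
  have := hanti (left_mem_Icc.2 hab.le) (right_mem_Icc.2 hab.le) hab.le
  rw [hWa, hWb] at this
  have h1 := hpos a (left_mem_Icc.2 hab.le)
  have h2 := hpos b (right_mem_Icc.2 hab.le)
  nlinarith


lemma rs_rpow_deriv (c : ℝ) (e z : ℝ) (hz : 0 < z + c) :
    HasDerivAt (fun z : ℝ => (z + c) ^ e) (e * (z + c) ^ (e - 1)) z := by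
  have h1 : HasDerivAt (fun z : ℝ => z + c) 1 z := (hasDerivAt_id z).add_const c
  have h2 := Real.hasDerivAt_rpow_const (x := z + c) (p := e) (Or.inl hz.ne')
  simpa [Function.comp_def] using h2.comp z h1


set_option maxHeartbeats 1000000

/-- Oscillation for positive eigenvalues in the Randall-Sundrum II problem: for `c > 0`
and `λ > 0`, every nonzero C² solution of `ξ'' - 3/(z+c) ξ' + λ ξ = 0` on `(0,∞)` has
infinitely many zeros in `(0,∞)`. -/
theorem randallSundrum_oscillation
    (c lam : ℝ) (hc : 0 < c) (hlam : 0 < lam) (ξ : ℝ → ℝ)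
    (hξ : ContDiffOn ℝ 2 ξ (Ioi 0))
    (hode : ∀ z > (0:ℝ),
      deriv (deriv ξ) z - (3/(z+c)) * deriv ξ z + lam * ξ z = 0)
    (hne : ∃ z > (0:ℝ), ξ z ≠ 0) :
    {z : ℝ | z ∈ Ioi (0:ℝ) ∧ ξ z = 0}.Infinite := by
  by_contra hinf
  have hSfin : {z : ℝ | z ∈ Ioi (0:ℝ) ∧ ξ z = 0}.Finite := Set.not_infinite.1 hinf
  obtain ⟨M, hM⟩ := hSfin.bddAbove
  set Z : ℝ := max M 1 with hZdef
  have hZ1 : (1:ℝ) ≤ Z := le_max_right _ _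
  have hZ0 : (0:ℝ) < Z := lt_of_lt_of_le one_pos hZ1
  have hnozero : ∀ z, Z < z → ξ z ≠ 0 := by
    intro z hz h0
    have hz0 : z ∈ Ioi (0:ℝ) := lt_trans hZ0 hz
    have : z ≤ M := hM ⟨hz0, h0⟩
    have : z ≤ Z := le_trans this (le_max_left _ _)
    linarith
  -- derivatives of ξ
  have hd1 : ∀ z ∈ Ioi (0:ℝ), HasDerivAt ξ (deriv ξ z) z := fun z hz =>
    ((hξ.differentiableOn (by norm_num)).differentiableAt (isOpen_Ioi.mem_nhds hz)).hasDerivAt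
  have hξ'cd : ContDiffOn ℝ 1 (deriv ξ) (Ioi 0) :=
    hξ.deriv_of_isOpen isOpen_Ioi (by norm_num)
  have hd2 : ∀ z ∈ Ioi (0:ℝ), HasDerivAt (deriv ξ) (deriv (deriv ξ) z) z := fun z hz =>
    ((hξ'cd.differentiableOn one_ne_zero).differentiableAt (isOpen_Ioi.mem_nhds hz)).hasDerivAt
  -- the transformed function u = (z+c)^(-3/2) ξ
  set g : ℝ → ℝ := fun z => (z + c) ^ (-(3/2) : ℝ) with hgdef
  set u : ℝ → ℝ := fun z => g z * ξ z with hudef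
  set u' : ℝ → ℝ := fun z =>
    (-(3/2)) * (z + c) ^ (-(5/2) : ℝ) * ξ z + g z * deriv ξ z with hu'def
  set Q : ℝ → ℝ := fun z => 15/4/(z+c)^2 - lam with hQdef
  have hpc : ∀ z : ℝ, 0 < z → 0 < z + c := fun z hz => by linarith
  have hg : ∀ z ∈ Ioi (0:ℝ), HasDerivAt g ((-(3/2)) * (z + c) ^ (-(5/2) : ℝ)) z := by
    intro z hz
    have := rs_rpow_deriv c (-(3/2)) z (hpc z hz)
    have he : (-(3/2) : ℝ) - 1 = -(5/2) := by norm_num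
    rwa [he] at this
  have hu : ∀ z ∈ Ioi (0:ℝ), HasDerivAt u (u' z) z := fun z hz =>
    (hg z hz).mul (hd1 z hz)
  have hu' : ∀ z ∈ Ioi (0:ℝ), HasDerivAt u' (Q z * u z) z := by
    intro z hz
    have hzc := hpc z hz
    have hg2 : HasDerivAt (fun z : ℝ => (-(3/2)) * (z + c) ^ (-(5/2) : ℝ))
        ((-(3/2)) * ((-(5/2)) * (z + c) ^ (-(7/2) : ℝ))) z := by
      have := rs_rpow_deriv c (-(5/2)) z hzc
      have he : (-(5/2) : ℝ) - 1 = -(7/2) := by norm_num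
      rw [he] at this
      exact this.const_mul _
    have hraw := (hg2.mul (hd1 z hz)).add ((hg z hz).mul (hd2 z hz))
    refine hraw.congr_deriv ?_
    -- algebra: the raw expression equals Q z * u z using the ODE
    have hodez : deriv (deriv ξ) z = 3/(z+c) * deriv ξ z - lam * ξ z := by
      have := hode z hz; linarith
    have e1 : (z + c) ^ (-(5/2) : ℝ) = (z + c) ^ (-(3/2) : ℝ) / (z + c) := by
      rw [show (-(5/2) : ℝ) = -(3/2) + (-1) by norm_num, Real.rpow_add hzc,
        Real.rpow_neg_one]
      ring
    have e0 : (z + c) ^ (-(2:ℝ)) = ((z + c) ^ 2)⁻¹ := by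
      rw [Real.rpow_neg hzc.le, show ((2:ℝ)) = ((2:ℕ):ℝ) by norm_num,
        Real.rpow_natCast]
    have e2 : (z + c) ^ (-(7/2) : ℝ) = (z + c) ^ (-(3/2) : ℝ) / (z + c) ^ 2 := by
      rw [show (-(7/2) : ℝ) = -(3/2) + (-2) by norm_num, Real.rpow_add hzc, e0]
      ring
    simp only [hQdef, hudef, hgdef]
    rw [hodez, e1, e2]
    field_simp
    ring
  -- constant sign beyond Z
  set z0 : ℝ := Z + 1 with hz0def
  have hz0Z : Z < z0 := by rw [hz0def]; linarith
  set ε : ℝ := if 0 < ξ z0 then 1 else -1 with hεdef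
  have hcont : ContinuousOn ξ (Ioi 0) := hξ.continuousOn
  have hprod : ∀ z, Z < z → 0 < ξ z0 * ξ z := by
    intro z hz
    have h1 : ξ z0 ≠ 0 := hnozero z0 hz0Z
    have h2 : ξ z ≠ 0 := hnozero z hz
    rcases lt_trichotomy (ξ z0 * ξ z) 0 with hlt | heq | hgt
    · exfalso
      have hsub : uIcc z0 z ⊆ Ioi (0:ℝ) := by
        intro x hx
        rw [Set.mem_uIcc] at hx
        have : min z0 z ≤ x := by
          rcases hx with ⟨h, _⟩ | ⟨h, _⟩
          · exact le_trans (min_le_left _ _) h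
          · exact le_trans (min_le_right _ _) h
        have hmin : Z < min z0 z := lt_min hz0Z hz
        exact lt_of_lt_of_le hZ0 (le_trans (le_of_lt hmin) this)
      have hmem : (0:ℝ) ∈ uIcc (ξ z0) (ξ z) := by
        rw [Set.mem_uIcc]
        rcases mul_neg_iff.1 hlt with ⟨ha, hb⟩ | ⟨ha, hb⟩
        · right; exact ⟨hb.le, ha.le⟩
        · left; exact ⟨ha.le, hb.le⟩
      obtain ⟨x, hx, hx0⟩ := intermediate_value_uIcc (hcont.mono hsub)  hmem
      have hxZ : Z < x := by
        rw [Set.mem_uIcc] at hx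
        have hmin : Z < min z0 z := lt_min hz0Z hz
        rcases hx with ⟨h, _⟩ | ⟨h, _⟩
        · exact lt_of_lt_of_le hmin (le_trans (min_le_left _ _) h)
        · exact lt_of_lt_of_le hmin (le_trans (min_le_right _ _) h)
      exact hnozero x hxZ hx0
    · exact absurd (mul_eq_zero.1 heq) (by simp [h1, h2])
    · exact hgt
  have hsign : ∀ z, Z < z → 0 < ε * ξ z := by
    intro z hz
    have hp := hprod z hz
    rw [hεdef]
    split_ifs with h
    · nlinarith
    · push_neg at h
      have h1 : ξ z0 ≠ 0 := hnozero z0 hz0Z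
      have : ξ z0 < 0 := lt_of_le_of_ne h h1
      nlinarith
  -- set up Sturm comparison
  set k : ℝ := Real.sqrt (lam/2) with hkdef
  have hk : 0 < k := Real.sqrt_pos.2 (by linarith)
  have hk2 : k^2 = lam/2 := Real.sq_sqrt (by linarith)
  set a : ℝ := max (Z + 1) (Real.sqrt (15/(2*lam))) with hadef
  have haZ : Z < a := lt_of_lt_of_le (by linarith) (le_max_left _ _)
  have hQle : ∀ z, a ≤ z → Q z ≤ -(k^2) := by
    intro z hzge
    have hsq : Real.sqrt (15/(2*lam)) ≤ z := le_trans (le_max_right _ _) hzge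
    have hz0 : 0 < z := lt_trans hZ0 (lt_of_lt_of_le haZ hzge)
    have hzc : 0 < z + c := by linarith
    have hsqlt : Real.sqrt (15/(2*lam)) < z + c := by linarith
    have hs2 : 15/(2*lam) < (z+c)^2 := by
      have h0 : (0:ℝ) ≤ 15/(2*lam) := by positivity
      calc 15/(2*lam) = Real.sqrt (15/(2*lam)) ^ 2 := (Real.sq_sqrt h0).symm
        _ < (z+c)^2 := by
            apply pow_lt_pow_left₀ hsqlt (Real.sqrt_nonneg _)
            norm_num
    have hzc2 : 0 < (z+c)^2 := by positivity
    simp only [hQdef]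
    rw [hk2]
    have hd : 15/4/(z+c)^2 * (z+c)^2 = 15/4 := by field_simp
    have hl : lam * (15/(2*lam)) = 15/2 := by
      field_simp
    nlinarith [hd, hs2, hzc2, hlam, hl, mul_pos hlam hzc2]
  set b : ℝ := a + π / k with hbdef
  set v : ℝ → ℝ := fun z => ε * u z with hvdef
  set v' : ℝ → ℝ := fun z => ε * u' z with hv'def
  have hIcc : ∀ z ∈ Icc a b, z ∈ Ioi (0:ℝ) ∧ Z < z := by
    intro z hz
    have : a ≤ z := hz.1
    exact ⟨lt_trans hZ0 (lt_of_lt_of_le haZ this), lt_of_lt_of_le haZ this⟩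
  apply sturm_contra v v' (fun z => Q z * v z) a k hk
  · intro z hz
    exact ((hu z (hIcc z hz).1).const_mul ε)
  · intro z hz
    have := (hu' z (hIcc z hz).1).const_mul ε
    refine this.congr_deriv ?_
    simp only [hvdef]; ring
  · intro z hz
    have hzI := hIcc z hz
    have hgpos : 0 < g z := Real.rpow_pos_of_pos (hpc z hzI.1) _
    have hs := hsign z hzI.2
    simp only [hvdef, hudef]
    nlinarith
  · intro z hz
    have hzI := hIcc z hz
    have hQz := hQle z hz.1
    have hgpos : 0 < g z := Real.rpow_pos_of_pos (hpc z hzI.1) _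
    have hs := hsign z hzI.2
    have hvpos : 0 < v z := by
      simp only [hvdef, hudef]; nlinarith
    exact mul_le_mul_of_nonneg_right hQz hvpos.le
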